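/- Let M be a p-matroid, B a basis of M with e ∈ B (e ∈ {a,b}). Then B ∪ {γ} is a basis of the es-splitting matroid M^e_{a,b}. -/

import Mathlib

open Matrix Set

variable {α : Type*}

/-- The columns of `A` indexed by `S` are linearly independent. -/
def ColIndep {m E F : Type*} [Semiring F] (A : Matrix m E F) (S : Set E) : Prop :=
  LinearIndependent F (fun s : S => Aᵀ s.1)

/-- `M` is the vector matroid of the matrix `A` (ground set all columns). -/
def IsVectorMatroid {m E F : Type*} [Semiring F] (M : Matroid E) (A : Matrix m E F) : Prop :=
  M.E = Set.univ ∧ ∀ S : Set E, M.Indep S ↔ ColIndep A S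

/-- The splitting matrix `A_{a,b}`: `A` with an extra row having `α` in columns `a`, `b`
and `0` elsewhere. -/
def splitMatrix {m E F : Type*} [Zero F] [DecidableEq E] (A : Matrix m E F) (a b : E) (α : F) :
    Matrix (m ⊕ Unit) E F :=
  Matrix.of fun i j =>
    Sum.elim (fun i' => A i' j) (fun _ => if j = a ∨ j = b then α else 0) i

/-- The column `z = (0,…,0,α)ᵀ`. -/
def zColumn {m F : Type*} [Zero F] (α : F) : m ⊕ Unit → F :=
  Sum.elim (fun _ => 0) (fun _ => α)

/-- The es-splitting matrix `A^e_{a,b}`: the splitting matrix with two extra columns,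
`Sum.inr 0 ↦ z = (0,…,0,α)ᵀ` and `Sum.inr 1 ↦ γ = e - z`. -/
def esMatrix {m E F : Type*} [Ring F] [DecidableEq E] (A : Matrix m E F) (a b e : E) (α : F) :
    Matrix (m ⊕ Unit) (E ⊕ Fin 2) F :=
  Matrix.of fun i j =>
    Sum.elim (fun x => splitMatrix A a b α i x)
      (fun k => if k = (0 : Fin 2) then zColumn α i
                else splitMatrix A a b α i e - zColumn α i) j

/-- A circuit of a matroid: a minimal dependent set. -/
def IsCircuit (M : Matroid α) (C : Set α) : Prop :=
  M.Dep C ∧ ∀ D, D ⊂ C → M.Indep D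

/-- The (ℕ-valued) rank of a set in a matroid: the largest size of an independent subset. -/
noncomputable def rk (M : Matroid α) (X : Set α) : ℕ :=
  sSup {n | ∃ I, I ⊆ X ∧ M.Indep I ∧ I.ncard = n}

/-- Every element lies in some circuit. -/
def Coloopless (M : Matroid α) : Prop :=
  ∀ x ∈ M.E, ∃ C, IsCircuit M C ∧ x ∈ C

/-- A simple matroid: every subset of the ground set with at most two elements is independent. -/
def SimpleMatroid (M : Matroid α) : Prop :=
  ∀ X ⊆ M.E, X.ncard ≤ 2 → M.Indep X

/-- A matroid is connected if every two distinct elements lie in a common circuit. -/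
def ConnectedMatroid (M : Matroid α) : Prop :=
  ∀ x ∈ M.E, ∀ y ∈ M.E, x ≠ y → ∃ C, IsCircuit M C ∧ x ∈ C ∧ y ∈ C

/-- A `k`-separation of `M`: a partition `{S, T}` of the ground set with `|S|, |T| ≥ k` and
`r(S) + r(T) - r(M) < k`. -/
def KSeparation (M : Matroid α) (k : ℕ) (S T : Set α) : Prop :=
  S ∪ T = M.E ∧ Disjoint S T ∧ k ≤ S.ncard ∧ k ≤ T.ncard ∧
    rk M S + rk M T < rk M M.E + k

/-- `M` is `n`-connected: it has no `k`-separation for `1 ≤ k ≤ n - 1`. -/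
def NConnected (M : Matroid α) (n : ℕ) : Prop :=
  ∀ k S T, 1 ≤ k → k ≤ n - 1 → ¬ KSeparation M k S T

/-- A matroid is Eulerian if its ground set is a disjoint union of circuits. -/
def Eulerian (M : Matroid α) : Prop :=
  ∃ (n : ℕ) (D : Fin n → Set α), (∀ i, IsCircuit M (D i)) ∧
    (∀ i j, i ≠ j → Disjoint (D i) (D j)) ∧ (⋃ i, D i) = M.E

/-- `C` carries a linear dependence of the columns of `A` with all coefficients nonzero
exactly on `C`, whose coefficients at `a` and `b` sum to zero. -/
def HasPDependence {m E F : Type*} [Semiring F] [Fintype E] (A : Matrix m E F)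
    (a b : E) (C : Set E) : Prop :=
  ∃ c : E → F, (∀ x, x ∈ C ↔ c x ≠ 0) ∧ (∑ x, c x • Aᵀ x) = 0 ∧ c a + c b = 0

/-- A `p`-circuit of the vector matroid `M = M[A]` with respect to `a, b`. -/
def IsPCircuit {m E F : Type*} [Semiring F] [Fintype E] (M : Matroid E) (A : Matrix m E F)
    (a b : E) (C : Set E) : Prop :=
  IsCircuit M C ∧ a ∈ C ∧ b ∈ C ∧ HasPDependence A a b C

/-- An `np`-circuit: a circuit meeting `{a, b}` that is not a `p`-circuit. -/
def IsNpCircuit {m E F : Type*} [Semiring F] [Fintype E] (M : Matroid E) (A : Matrix m E F)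
    (a b : E) (C : Set E) : Prop :=
  IsCircuit M C ∧ (C ∩ {a, b}).Nonempty ∧ ¬ HasPDependence A a b C


/-! Let `π : K^(m ⊕ 1) → K^m` forget the appended row. It sends the column `x` of
`A^e_{a,b}` to the column `x` of `A`, kills `z`, and its kernel is spanned by `z`.
Since `γ = e - z` and `e ∈ B`, the span of `B ∪ {γ}` is the span of `B ∪ {z}`. It contains
`ker π`, and its image under `π` contains the columns of `A`, so it contains every column.
If `γ` were in the span of `B`, so would be `z`; but `π` is injective on that span, because
the columns of `A` indexed by `B` are independent. -/

open Submodule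

theorem IsVectorMatroid.isBase_iff {m E K : Type*} [DivisionRing K] {M : Matroid E}
    {A : Matrix m E K} (hM : IsVectorMatroid M A) {B : Set E} :
    M.IsBase B ↔ LinearIndepOn K A.col B ∧ ∀ x, A.col x ∈ span K (A.col '' B) := by
  have hindep : ∀ S, M.Indep S ↔ LinearIndepOn K A.col S := hM.2
  refine ⟨fun hB => ⟨(hindep B).mp hB.indep, fun x => ?_⟩, fun ⟨hB, hspan⟩ => ?_⟩
  · by_cases hx : x ∈ B
    · exact subset_span (mem_image_of_mem _ hx)
    · have hdep := (hB.insert_dep ⟨hM.1 ▸ mem_univ x, hx⟩).not_indep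
      rw [hindep, linearIndepOn_insert hx] at hdep
      by_contra hnot
      exact hdep ⟨(hindep B).mp hB.indep, hnot⟩
  · refine ((hindep B).mpr hB).isBase_of_forall_insert fun x hx => ?_
    rw [hindep, linearIndepOn_insert hx.2]
    exact fun h => h.2 (hspan x)

section esMatrix

variable {m E K : Type*} [Field K] [DecidableEq E] (A : Matrix m E K) (a b e : E) (α : K)

theorem funLeft_inl_esMatrix_col_inl (x : E) :
    LinearMap.funLeft K K Sum.inl ((esMatrix A a b e α).col (Sum.inl x)) = A.col x :=
  rfl

theorem esMatrix_col_inr_zero : (esMatrix A a b e α).col (Sum.inr 0) = zColumn α :=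
  rfl

theorem esMatrix_col_inr_one :
    (esMatrix A a b e α).col (Sum.inr 1) = (esMatrix A a b e α).col (Sum.inl e) - zColumn α :=
  rfl

theorem funLeft_inl_zColumn : LinearMap.funLeft K K (Sum.inl : m → m ⊕ Unit) (zColumn α) = 0 :=
  rfl

variable {α}

theorem zColumn_ne_zero (hα : α ≠ 0) : (zColumn α : m ⊕ Unit → K) ≠ 0 :=
  fun h => hα (congrFun h (Sum.inr ()))

theorem ker_funLeft_inl_le_span_zColumn (hα : α ≠ 0) :
    LinearMap.ker (LinearMap.funLeft K K (Sum.inl : m → m ⊕ Unit)) ≤ K ∙ zColumn α := by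
  intro v hv
  rw [mem_span_singleton]
  refine ⟨v (Sum.inr ()) / α, funext ?_⟩
  rintro (i | ⟨⟩)
  · simpa [zColumn] using (congrFun hv i).symm
  · simp [zColumn, hα]

variable {A e} {B : Set E}

theorem linearIndepOn_esMatrix_insert_inr_one (hα : α ≠ 0)
    (hB : LinearIndepOn K A.col B) (heB : e ∈ B) :
    LinearIndepOn K (esMatrix A a b e α).col (insert (Sum.inr 1) (Sum.inl '' B)) := by
  set c := (esMatrix A a b e α).col
  have hdisj : Disjoint (span K ((c ∘ Sum.inl) '' B))
      (LinearMap.ker (LinearMap.funLeft K K (Sum.inl : m → m ⊕ Unit))) := by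
    rw [image_eq_range]
    exact range_ker_disjoint (v := fun x : B => c (Sum.inl x)) hB
  rw [linearIndepOn_insert (by simp), ← image_comp]
  have hinl : LinearIndepOn K (c ∘ Sum.inl) B :=
    LinearIndepOn.of_comp (LinearMap.funLeft K K Sum.inl) (v := c ∘ Sum.inl) hB
  refine ⟨hinl.image_of_comp, fun hγ => zColumn_ne_zero (m := m) hα ?_⟩
  have hz : zColumn α ∈ span K ((c ∘ Sum.inl) '' B) := by
    have he : c (Sum.inl e) ∈ span K ((c ∘ Sum.inl) '' B) := subset_span ⟨e, heB, rfl⟩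
    have hγe : c (Sum.inr 1) = c (Sum.inl e) - zColumn α := esMatrix_col_inr_one A a b e α
    simpa only [hγe, sub_sub_cancel] using sub_mem he hγ
  exact disjoint_def.mp hdisj _ hz (funLeft_inl_zColumn α)

theorem esMatrix_col_mem_span_insert_inr_one (hα : α ≠ 0)
    (hspan : ∀ x, A.col x ∈ span K (A.col '' B)) (heB : e ∈ B) (y : E ⊕ Fin 2) :
    (esMatrix A a b e α).col y ∈
      span K ((esMatrix A a b e α).col '' insert (Sum.inr 1) (Sum.inl '' B)) := by
  set c := (esMatrix A a b e α).col
  set P := span K (c '' insert (Sum.inr 1) (Sum.inl '' B))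
  have hmem : ∀ y ∈ insert (Sum.inr 1) (Sum.inl '' B), c y ∈ P :=
    fun y hy => subset_span (mem_image_of_mem c hy)
  have hz : zColumn α ∈ P := by
    have hγe : c (Sum.inr 1) = c (Sum.inl e) - zColumn α := esMatrix_col_inr_one A a b e α
    simpa only [hγe, sub_sub_cancel] using
      sub_mem (hmem _ (Or.inr ⟨e, heB, rfl⟩)) (hmem _ (mem_insert _ _))
  have hker : LinearMap.ker (LinearMap.funLeft K K (Sum.inl : m → m ⊕ Unit)) ≤ P :=
    (ker_funLeft_inl_le_span_zColumn hα).trans (span_singleton_le_iff_mem _ _ |>.mpr hz)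
  rcases y with x | k
  · rw [← comap_map_eq_self hker, mem_comap, funLeft_inl_esMatrix_col_inl, map_span]
    refine span_mono ?_ (hspan x)
    rintro _ ⟨v, hv, rfl⟩
    exact ⟨c (Sum.inl v), mem_image_of_mem c (Or.inr ⟨v, hv, rfl⟩), rfl⟩
  · fin_cases k
    · show c (Sum.inr 0) ∈ P
      rwa [show c (Sum.inr 0) = zColumn α from esMatrix_col_inr_zero A a b e α]
    · exact hmem _ (mem_insert _ _)

end esMatrix

variable {m E : Type*} [Fintype m] [Fintype E] [DecidableEq E] {p : ℕ} [Fact p.Prime]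

theorem esSplitting_base_gamma_general (A : Matrix m E (ZMod p)) (a b e : E)
    (α : ZMod p) (hα : α ≠ 0)
    (M : Matroid E) (hM : IsVectorMatroid M A)
    (M' : Matroid (E ⊕ Fin 2)) (hM' : IsVectorMatroid M' (esMatrix A a b e α))
    (B : Set E) (hB : M.IsBase B) (heB : e ∈ B) :
    M'.IsBase (Sum.inl '' B ∪ {Sum.inr 1}) := by
  obtain ⟨hBindep, hBspan⟩ := hM.isBase_iff.mp hB
  rw [hM'.isBase_iff, union_singleton]
  exact ⟨linearIndepOn_esMatrix_insert_inr_one a b hα hBindep heB,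
    esMatrix_col_mem_span_insert_inr_one a b hα hBspan heB⟩

theorem esSplitting_base_gamma (A : Matrix m E (ZMod p)) (a b e : E)
    (he : e = a ∨ e = b) (α : ZMod p) (hα : α ≠ 0)
    (M : Matroid E) (hM : IsVectorMatroid M A)
    (M' : Matroid (E ⊕ Fin 2)) (hM' : IsVectorMatroid M' (esMatrix A a b e α))
    (B : Set E) (hB : M.IsBase B) (heB : e ∈ B) :
    M'.IsBase (Sum.inl '' B ∪ {Sum.inr 1}) :=
  esSplitting_base_gamma_general A a b e α hα M hM M' hM' B hB heB
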